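/- Let a > 0 and C₀ ≥ 0. There exists ε₀ > 0 (depending only on a and C₀) such that: for every continuously differentiable function ρ : [0, ∞) → ℝ with ρ(t) > 0 for all t ≥ 0, ρ(0) ≤ ε₀, and |ρ'(t) + a·ρ(t)³| ≤ C₀·ρ(t)⁴ for all t ≥ 0, there exists a constant C₁ > 0 such that |ρ(t)·√(2at) − 1| ≤ C₁/√t for all t ≥ 1. In particular ρ(t)·√(2at) → 1 as t → ∞. -/

import Mathlib

/-!
Substituting `u = ρ⁻²` turns the equation into `u' = -2ρ'/ρ³ = 2a + O(ρ)`. Once `ρ(0) ≤ ε₀`,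
`ρ` never rises above `ε₀`, since `ρ' ≤ ρ³(C₀ρ - a) < 0` at that level; hence `u' ≥ a`,
so `u(t) ≥ at` and `ρ(t) ≤ (at)^(-1/2)`. Feeding this back gives `u' = 2a + O(t^(-1/2))`, which
integrates to `u(t) = 2at + O(√t)`, and `ρ√(2at) = √(2at/u) = 1 + O(t^(-1/2))`.
-/

open Real Set

theorem le_of_hasDerivWithinAt_neg_of_eq {f f' : ℝ → ℝ} {t₀ c : ℝ}
    (hf : ∀ t ∈ Ici t₀, HasDerivWithinAt f (f' t) (Ici t₀) t) (h₀ : f t₀ ≤ c)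
    (hc : ∀ t ∈ Ici t₀, f t = c → f' t < 0) : ∀ t ∈ Ici t₀, f t ≤ c := fun t ht =>
  image_le_of_deriv_right_lt_deriv_boundary' (b := t) (B := fun _ => c) (B' := fun _ => 0)
    (fun x hx => (hf x hx.1).continuousWithinAt.mono Icc_subset_Ici_self)
    (fun x hx => (hf x hx.1).mono (Ici_subset_Ici.2 hx.1)) h₀ continuousOn_const
    (fun x _ => hasDerivWithinAt_const x _ c) (fun x hx => hc x hx.1) ⟨ht, le_rfl⟩

theorem mul_sub_le_image_sub_of_le_deriv_Ici {f f' : ℝ → ℝ} {t₀ c : ℝ}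
    (hf : ∀ t ∈ Ici t₀, HasDerivWithinAt f (f' t) (Ici t₀) t) (hc : ∀ t ∈ Ici t₀, c ≤ f' t) :
    ∀ t ∈ Ici t₀, c * (t - t₀) ≤ f t - f t₀ := by
  intro t ht
  have hline : ∀ x, HasDerivWithinAt (fun s => f t₀ + c * (s - t₀)) c (Ici x) x := fun x => by
    simpa using (((hasDerivAt_id x).sub_const t₀).const_mul c).const_add (f t₀) |>.hasDerivWithinAt
  have hle := image_le_of_deriv_right_le_deriv_boundary (b := t) (by fun_prop)
    (fun x _ => hline x) (by simp)
    (fun x hx => (hf x hx.1).continuousWithinAt.mono Icc_subset_Ici_self)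
    (fun x hx => (hf x hx.1).mono (Ici_subset_Ici.2 hx.1)) (fun x hx => hc x hx.1) ⟨ht, le_rfl⟩
  linarith

theorem abs_image_sub_sub_le_of_abs_deriv_sub_le_div_sqrt {f f' : ℝ → ℝ} {t₀ b K : ℝ}
    (ht₀ : 0 < t₀) (hf : ∀ t ∈ Ici t₀, HasDerivWithinAt f (f' t) (Ici t₀) t)
    (hK : ∀ t ∈ Ici t₀, |f' t - b| ≤ K / √t) :
    ∀ t ∈ Ici t₀, |f t - f t₀ - b * (t - t₀)| ≤ 2 * K * (√t - √t₀) := by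
  intro t ht
  have hsqrt : ∀ x ∈ Icc t₀ t,
      HasDerivWithinAt (fun s => 2 * K * (√s - √t₀)) (K / √x) (Ici x) x := by
    intro x hx
    have hx0 : 0 < x := ht₀.trans_le hx.1
    exact (((hasDerivAt_sqrt hx0.ne').sub_const √t₀).const_mul (2 * K)).hasDerivWithinAt
      |>.congr_deriv (by field_simp)
  have hline : ∀ x, HasDerivWithinAt (fun s => f t₀ + b * (s - t₀)) b (Ici x) x := fun x => by
    simpa using (((hasDerivAt_id x).sub_const t₀).const_mul b).const_add (f t₀) |>.hasDerivWithinAt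
  simpa only [Real.norm_eq_abs, sub_self, mul_zero, add_zero, sub_zero, sub_sub] using
    image_norm_le_of_norm_deriv_right_le_deriv_boundary' (b := t)
      (f := fun s => f s - (f t₀ + b * (s - t₀))) (f' := fun s => f' s - b)
      (fun x hx => ((hf x hx.1).continuousWithinAt.mono Icc_subset_Ici_self).sub
        (Continuous.continuousWithinAt (by fun_prop)))
      (fun x hx => ((hf x hx.1).mono (Ici_subset_Ici.2 hx.1)).sub (hline x))
      (by simp) (by fun_prop)
      (fun x hx => hsqrt x (Ico_subset_Icc_self hx)) (fun x hx => by simpa using hK x hx.1)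
      ⟨ht, le_rfl⟩

theorem HasDerivWithinAt.inv_sq {f : ℝ → ℝ} {f' x : ℝ} {s : Set ℝ}
    (hf : HasDerivWithinAt f f' s x) (hx : f x ≠ 0) :
    HasDerivWithinAt (fun t => (f t ^ 2)⁻¹) (-2 * f' / f x ^ 3) s x := by
  refine ((hf.pow 2).inv (pow_ne_zero 2 hx)).congr_deriv ?_
  simp only [Pi.pow_apply]
  field_simp
  ring

theorem abs_neg_two_mul_div_pow_three_sub_le {r d a C : ℝ} (hr : 0 < r)
    (h : |d + a * r ^ 3| ≤ C * r ^ 4) : |-2 * d / r ^ 3 - 2 * a| ≤ 2 * C * r := by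
  have hr3 : 0 < r ^ 3 := pow_pos hr 3
  rw [show -2 * d / r ^ 3 - 2 * a = -2 * (d + a * r ^ 3) / r ^ 3 by field_simp; ring,
    abs_div, abs_mul, abs_of_pos hr3, div_le_iff₀ hr3]
  norm_num
  nlinarith

theorem abs_sub_one_le_abs_sq_sub_one {x : ℝ} (hx : 0 ≤ x) : |x - 1| ≤ |x ^ 2 - 1| := by
  rw [show x ^ 2 - 1 = (x - 1) * (x + 1) by ring, abs_mul]
  exact le_mul_of_one_le_right (abs_nonneg _) (by rw [abs_of_nonneg (by linarith)]; linarith)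

theorem le_inv_sqrt_of_le_inv_sq {r c : ℝ} (hr : 0 < r) (hc₀ : 0 < c) (hc : c ≤ (r ^ 2)⁻¹) :
    r ≤ (√c)⁻¹ := by
  rw [← sqrt_inv, le_sqrt hr.le (inv_nonneg.2 hc₀.le)]
  exact (le_inv_comm₀ hc₀ (by positivity)).1 hc

section CubicDamping

variable {a C₀ : ℝ} {ρ ρ' : ℝ → ℝ}

theorem le_of_abs_deriv_add_mul_cube_le
    (hderiv : ∀ t ∈ Ici 0, HasDerivWithinAt ρ (ρ' t) (Ici 0) t)
    (hpos : ∀ t, 0 ≤ t → 0 < ρ t) (hineq : ∀ t, 0 ≤ t → |ρ' t + a * ρ t ^ 3| ≤ C₀ * ρ t ^ 4)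
    {ε : ℝ} (hε : C₀ * ε < a) (h₀ : ρ 0 ≤ ε) : ∀ t, 0 ≤ t → ρ t ≤ ε := by
  refine le_of_hasDerivWithinAt_neg_of_eq hderiv h₀ fun t ht hρt => ?_
  have hρ3 : 0 < ρ t ^ 3 := pow_pos (hpos t ht) 3
  have hupper := (abs_le.1 (hineq t ht)).2
  rw [hρt] at hρ3 hupper
  nlinarith

theorem exists_hasDerivWithinAt_inv_sq
    (hderiv : ∀ t ∈ Ici 0, HasDerivWithinAt ρ (ρ' t) (Ici 0) t)
    (hpos : ∀ t, 0 ≤ t → 0 < ρ t) (hineq : ∀ t, 0 ≤ t → |ρ' t + a * ρ t ^ 3| ≤ C₀ * ρ t ^ 4) :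
    ∃ u' : ℝ → ℝ, (∀ t ∈ Ici 0, HasDerivWithinAt (fun s => (ρ s ^ 2)⁻¹) (u' t) (Ici 0) t) ∧
      ∀ t, 0 ≤ t → |u' t - 2 * a| ≤ 2 * C₀ * ρ t :=
  ⟨fun t => -2 * ρ' t / ρ t ^ 3, fun t ht => (hderiv t ht).inv_sq (hpos t ht).ne',
    fun t ht => abs_neg_two_mul_div_pow_three_sub_le (hpos t ht) (hineq t ht)⟩

theorem mul_le_inv_sq_of_abs_deriv_add_mul_cube_le
    (hderiv : ∀ t ∈ Ici 0, HasDerivWithinAt ρ (ρ' t) (Ici 0) t)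
    (hpos : ∀ t, 0 ≤ t → 0 < ρ t) (hineq : ∀ t, 0 ≤ t → |ρ' t + a * ρ t ^ 3| ≤ C₀ * ρ t ^ 4)
    (hsmall : ∀ t, 0 ≤ t → 2 * C₀ * ρ t ≤ a) : ∀ t, 0 ≤ t → a * t ≤ (ρ t ^ 2)⁻¹ := by
  obtain ⟨u', hu, hu'⟩ := exists_hasDerivWithinAt_inv_sq hderiv hpos hineq
  intro t ht
  have hgrowth := mul_sub_le_image_sub_of_le_deriv_Ici (c := a) hu
    (fun s hs => by linarith [(abs_le.1 (hu' s hs)).1, hsmall s hs]) t ht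
  have hu₀ := inv_pos.2 (pow_pos (hpos 0 le_rfl) 2)
  simp only [sub_zero] at hgrowth
  linarith

theorem abs_inv_sq_sub_le_of_abs_deriv_add_mul_cube_le (ha : 0 < a) (hC₀ : 0 ≤ C₀)
    (hderiv : ∀ t ∈ Ici 0, HasDerivWithinAt ρ (ρ' t) (Ici 0) t)
    (hpos : ∀ t, 0 ≤ t → 0 < ρ t) (hineq : ∀ t, 0 ≤ t → |ρ' t + a * ρ t ^ 3| ≤ C₀ * ρ t ^ 4)
    (hlower : ∀ t, 0 ≤ t → a * t ≤ (ρ t ^ 2)⁻¹) :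
    ∃ B, 0 < B ∧ ∀ t, 1 ≤ t → |(ρ t ^ 2)⁻¹ - 2 * a * t| ≤ B * √t := by
  obtain ⟨u', hu, hu'⟩ := exists_hasDerivWithinAt_inv_sq hderiv hpos hineq
  set K := 2 * C₀ / √a
  have hK : ∀ t ∈ Ici (1 : ℝ), |u' t - 2 * a| ≤ K / √t := fun t ht => by
    have ht0 : (0 : ℝ) < t := one_pos.trans_le ht
    calc |u' t - 2 * a| ≤ 2 * C₀ * ρ t := hu' t ht0.le
      _ ≤ 2 * C₀ * (√(a * t))⁻¹ :=
        mul_le_mul_of_nonneg_left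
          (le_inv_sqrt_of_le_inv_sq (hpos t ht0.le) (by positivity) (hlower t ht0.le))
          (by positivity)
      _ = K / √t := by rw [sqrt_mul ha.le]; simp only [K]; field_simp
  have hdev := abs_image_sub_sub_le_of_abs_deriv_sub_le_div_sqrt one_pos
    (fun t ht => (hu t (show (0 : ℝ) ≤ t from zero_le_one.trans ht)).mono
      (Ici_subset_Ici.2 zero_le_one)) hK
  refine ⟨|(ρ 1 ^ 2)⁻¹ - 2 * a| + 2 * K + 1, by positivity, fun t ht => ?_⟩
  have hsqrt : 1 ≤ √t := one_le_sqrt.2 ht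
  have hdevt := hdev t ht
  simp only [sqrt_one] at hdevt
  calc |(ρ t ^ 2)⁻¹ - 2 * a * t|
      ≤ |(ρ 1 ^ 2)⁻¹ - 2 * a| + |(ρ t ^ 2)⁻¹ - (ρ 1 ^ 2)⁻¹ - 2 * a * (t - 1)| := by
        refine le_of_eq_of_le ?_ (abs_add_le _ _)
        ring_nf
    _ ≤ |(ρ 1 ^ 2)⁻¹ - 2 * a| + 2 * K * (√t - 1) := by gcongr
    _ ≤ (|(ρ 1 ^ 2)⁻¹ - 2 * a| + 2 * K + 1) * √t := by
        nlinarith [abs_nonneg ((ρ 1 ^ 2)⁻¹ - 2 * a), (by positivity : 0 ≤ K)]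

end CubicDamping

theorem abs_mul_sqrt_sub_one_le {a r t B : ℝ} (ha : 0 < a) (ht : 1 ≤ t) (hr : 0 < r)
    (hlower : a * t ≤ (r ^ 2)⁻¹) (hdev : |(r ^ 2)⁻¹ - 2 * a * t| ≤ B * √t) :
    |r * √(2 * a * t) - 1| ≤ B / a / √t := by
  have ht0 : 0 < t := one_pos.trans_le ht
  calc |r * √(2 * a * t) - 1| ≤ |(r * √(2 * a * t)) ^ 2 - 1| :=
        abs_sub_one_le_abs_sq_sub_one (by positivity)
    _ = r ^ 2 * |(r ^ 2)⁻¹ - 2 * a * t| := by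
        have key : (r * √(2 * a * t)) ^ 2 - 1 = r ^ 2 * (2 * a * t - (r ^ 2)⁻¹) := by
          rw [mul_pow, sq_sqrt (by positivity)]
          field_simp
        rw [key, abs_mul, abs_of_pos (pow_pos hr 2), abs_sub_comm]
    _ ≤ (a * t)⁻¹ * (B * √t) := by
        gcongr
        exact (le_inv_comm₀ (by positivity) (by positivity)).1 hlower
    _ = B / a / √t := by
        field_simp
        rw [sq_sqrt ht0.le]
        ring

theorem stmt_16 (a C₀ : ℝ) (ha : 0 < a) (hC₀ : 0 ≤ C₀) :
    ∃ ε₀ : ℝ, 0 < ε₀ ∧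
      ∀ ρ ρ' : ℝ → ℝ,
        ContinuousOn ρ' (Set.Ici (0:ℝ)) →
        (∀ t ∈ Set.Ici (0:ℝ), HasDerivWithinAt ρ (ρ' t) (Set.Ici (0:ℝ)) t) →
        (∀ t : ℝ, 0 ≤ t → 0 < ρ t) →
        ρ 0 ≤ ε₀ →
        (∀ t : ℝ, 0 ≤ t → |ρ' t + a * ρ t ^ 3| ≤ C₀ * ρ t ^ 4) →
        ∃ C₁ : ℝ, 0 < C₁ ∧
          ∀ t : ℝ, 1 ≤ t →
            |ρ t * Real.sqrt (2 * a * t) - 1| ≤ C₁ / Real.sqrt t := by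
  have hε : 2 * C₀ * (a / (2 * (C₀ + 1))) < a := by
    rw [← mul_div_assoc, div_lt_iff₀ (by positivity)]
    nlinarith
  refine ⟨a / (2 * (C₀ + 1)), by positivity, fun ρ ρ' _ hderiv hpos h₀ hineq => ?_⟩
  have hsmall := le_of_abs_deriv_add_mul_cube_le hderiv hpos hineq (by nlinarith) h₀
  have hlower := mul_le_inv_sq_of_abs_deriv_add_mul_cube_le hderiv hpos hineq fun t ht => by
    nlinarith [mul_le_mul_of_nonneg_left (hsmall t ht) hC₀]
  obtain ⟨B, hB, hdev⟩ :=
    abs_inv_sq_sub_le_of_abs_deriv_add_mul_cube_le ha hC₀ hderiv hpos hineq hlower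
  refine ⟨B / a, by positivity, fun t ht => ?_⟩
  have ht0 : (0 : ℝ) ≤ t := zero_le_one.trans ht
  exact abs_mul_sqrt_sub_one_le ha ht (hpos t ht0) (hlower t ht0) (hdev t ht)
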